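/- Let (A,B,R,σ) be a normalized context. If the concept lattice M has a decomposition into independent blocks {K_μ}_{μ∈Λ}, then (A,B,R,σ) has a decomposition into independent subcontexts; specifically, the family {(A_μ,B_μ)}_{μ∈Λ}, where A_μ = {a∈A : ⟨φ_{a,x}↓, φ_{a,x}↓↑⟩ ∈ K_μ∖{⟨g_⊤,f_⊥⟩, ⟨g_⊥,f_⊤⟩} for some x∈L} and B_μ = {b∈B : ⟨φ_{b,y}↑↓, φ_{b,y}↑⟩ ∈ K_μ∖{⟨g_⊤,f_⊥⟩, ⟨g_⊥,f_⊤⟩} for some y∈L}, is a decomposition of (A,B,R,σ) into independent subcontexts. -/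
import Mathlib


/-- A multi-adjoint frame together with a formal context `(A, B, R, σ)`.
`conj i`, `limp i`, `rimp i` form an adjoint triple on the complete lattice `L` for each
index `i : I`, and each conjunctor satisfies the boundary condition
`x & ⊤ = ⊤ & x = x`. -/
structure FCAContext (L : Type*) [CompleteLattice L] (I A B : Type*) where
  conj : I → L → L → L
  limp : I → L → L → L
  rimp : I → L → L → L
  R : A → B → L
  sig : A → B → I
  adjoint_left : ∀ i x y z, x ≤ limp i z y ↔ conj i x y ≤ z
  adjoint_right : ∀ i x y z, conj i x y ≤ z ↔ y ≤ rimp i z x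
  boundary_left : ∀ i x, conj i ⊤ x = x
  boundary_right : ∀ i x, conj i x ⊤ = x

namespace FCAContext

variable {L I A B : Type*} [CompleteLattice L]

open Classical in
/-- The fuzzy-attribute `φ_{a,x}`. -/
noncomputable def phiA (a : A) (x : L) : A → L :=
  fun a' => if a' = a then x else ⊥

open Classical in
/-- The fuzzy-object `φ_{b,y}`. -/
noncomputable def phiB (b : B) (y : L) : B → L :=
  fun b' => if b' = b then y else ⊥

/-- The pair `⟨g_⊤, f_⊥⟩` (the top of the concept lattice of a normalized context). -/
def topC : (B → L) × (A → L) := (fun _ => (⊤ : L), fun _ => (⊥ : L))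

/-- The pair `⟨g_⊥, f_⊤⟩` (the bottom of the concept lattice of a normalized context). -/
def botC : (B → L) × (A → L) := (fun _ => (⊥ : L), fun _ => (⊤ : L))

/-- The order on concepts: `⟨g₁,f₁⟩ ⪯ ⟨g₂,f₂⟩ iff g₁ ≤ g₂` pointwise. -/
def cle (c d : (B → L) × (A → L)) : Prop := c.1 ≤ d.1

variable (C : FCAContext L I A B)

/-- The derivation operator `↑` on fuzzy sets of objects:
`g↑(a) = ⨅_b R(a,b) ↙^{σ(a,b)} g(b)`. -/
def up (g : B → L) : A → L := fun a => ⨅ b, C.limp (C.sig a b) (C.R a b) (g b)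

/-- The derivation operator `↓` on fuzzy sets of attributes:
`f↓(b) = ⨅_a R(a,b) ↖_{σ(a,b)} f(a)`. -/
def down (f : A → L) : B → L := fun b => ⨅ a, C.rimp (C.sig a b) (C.R a b) (f a)

/-- The concept lattice `M`: pairs `⟨g, f⟩` with `g↑ = f` and `f↓ = g`. -/
def concepts : Set ((B → L) × (A → L)) :=
  {c | C.up c.1 = c.2 ∧ C.down c.2 = c.1}

/-- The pair `⟨φ_{a,x}↓, φ_{a,x}↓↑⟩` generated by a fuzzy-attribute. -/
noncomputable def attrConcept (a : A) (x : L) : (B → L) × (A → L) :=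
  (C.down (phiA a x), C.up (C.down (phiA a x)))

/-- The pair `⟨φ_{b,y}↑↓, φ_{b,y}↑⟩` generated by a fuzzy-object. -/
noncomputable def objConcept (b : B) (y : L) : (B → L) × (A → L) :=
  (C.down (C.up (phiB b y)), C.up (phiB b y))

/-- A context is *normalized* when every attribute is related to some object with a
non-bottom value and to some object with the bottom value, and symmetrically for
objects. -/
def Normalized : Prop :=
  (∀ a : A, ∃ b : B, C.R a b ≠ ⊥) ∧ (∀ a : A, ∃ b : B, C.R a b = ⊥) ∧
  (∀ b : B, ∃ a : A, C.R a b ≠ ⊥) ∧ (∀ b : B, ∃ a : A, C.R a b = ⊥)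

/-- The conjunctor associated with the index `i` has no zero-divisors. -/
def NoZeroDiv (i : I) : Prop :=
  ∀ x y : L, x ≠ ⊥ → y ≠ ⊥ → C.conj i x y ≠ ⊥

/-- `(Y, X)` is a *separable subcontext* of the context. -/
def SeparableSubcontext (Y : Set A) (X : Set B) : Prop :=
  Y.Nonempty ∧ X.Nonempty ∧ Y ≠ Set.univ ∧ X ≠ Set.univ ∧
  (∃ a ∈ Y, ∃ b ∈ X, C.R a b ≠ ⊥) ∧
  (∀ a ∈ Y, ∀ b ∉ X, C.R a b = ⊥) ∧
  (∀ a ∉ Y, ∀ b ∈ X, C.R a b = ⊥)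

/-- A family `{(Afam l, Bfam l)}_{l : Λ}` is a *decomposition into independent
subcontexts* of the context. -/
def SubcontextDecomposition {Λ : Type*} (Afam : Λ → Set A) (Bfam : Λ → Set B) : Prop :=
  Nonempty Λ ∧
  (∀ l, C.SeparableSubcontext (Afam l) (Bfam l)) ∧
  (∀ l m, l ≠ m → Disjoint (Afam l) (Afam m)) ∧
  (∀ l m, l ≠ m → Disjoint (Bfam l) (Bfam m)) ∧
  (⋃ l, Afam l) = Set.univ ∧ (⋃ l, Bfam l) = Set.univ ∧
  (∀ l, ∀ a ∉ Afam l, ∀ b ∈ Bfam l, C.NoZeroDiv (C.sig a b)) ∧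
  (∀ l, ∀ a ∈ Afam l, ∀ b ∉ Bfam l, C.NoZeroDiv (C.sig a b))

/-- The meet of two concepts in the concept lattice: the extent is the pointwise
infimum of the extents. -/
def cmeet (c d : (B → L) × (A → L)) : (B → L) × (A → L) :=
  (c.1 ⊓ d.1, C.up (c.1 ⊓ d.1))

/-- The join of two concepts in the concept lattice: the intent is the pointwise
infimum of the intents. -/
def cjoin (c d : (B → L) × (A → L)) : (B → L) × (A → L) :=
  (C.down (c.2 ⊓ d.2), c.2 ⊓ d.2)

/-- A concept is *meet-irreducible* in the concept lattice `M` if it is not the top of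
`M` (its extent is not `g_⊤`) and whenever it is the meet of two concepts it equals one
of them. -/
def MeetIrred (m : (B → L) × (A → L)) : Prop :=
  m ∈ C.concepts ∧ m.1 ≠ (fun _ => (⊤ : L)) ∧
  ∀ c d, c ∈ C.concepts → d ∈ C.concepts → m.1 = c.1 ⊓ d.1 → m = c ∨ m = d

/-- `M_F^{A'}`: the meet-irreducible concepts generated by fuzzy-attributes with
attribute in `A'`. -/
noncomputable def MF (A' : Set A) : Set ((B → L) × (A → L)) :=
  {m | C.MeetIrred m ∧ ∃ a ∈ A', ∃ x : L, m = C.attrConcept a x}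

/-- `M_g^{A'}`: the elements of `M_F^{A'}` above the concept with extent `g`. -/
noncomputable def Mg (g : B → L) (A' : Set A) : Set ((B → L) × (A → L)) :=
  {m ∈ C.MF A' | g ≤ m.1}

/-- The concept lattice satisfies the ascending chain condition. -/
def ACC : Prop :=
  ∀ c : ℕ → (B → L) × (A → L), (∀ n, c n ∈ C.concepts) →
    (∀ n, cle (c n) (c (n + 1))) → ∃ n, ∀ m, n ≤ m → c m = c n

/-- `K` is a *block of concepts* of the concept lattice `M`: a sublattice of `M`,
different from `M`, containing some concept other than the top `⟨g_⊤,f_⊥⟩` and the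
bottom `⟨g_⊥,f_⊤⟩`, and closed under comparability except for the top and the bottom. -/
def IsBlockM (K : Set ((B → L) × (A → L))) : Prop :=
  K ⊆ C.concepts ∧ K ≠ C.concepts ∧
  (K \ ({topC, botC} : Set ((B → L) × (A → L)))).Nonempty ∧
  (∀ c ∈ K, ∀ d ∈ K, C.cmeet c d ∈ K ∧ C.cjoin c d ∈ K) ∧
  ∀ k ∈ K \ ({topC, botC} : Set ((B → L) × (A → L))), ∀ c ∈ C.concepts,
    (cle k c ∨ cle c k) →
    c ∉ ({topC, botC} : Set ((B → L) × (A → L))) → c ∈ K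

/-- A complete block of concepts: a block containing the top and the bottom of `M`. -/
def IsCompleteBlockM (K : Set ((B → L) × (A → L))) : Prop :=
  C.IsBlockM K ∧ topC ∈ K ∧ botC ∈ K

/-- A family `{K l}_{l : Λ}` is a *decomposition into independent blocks* of the
concept lattice `M`. -/
def BlockDecomposition {Λ : Type*} (K : Λ → Set ((B → L) × (A → L))) : Prop :=
  Nonempty Λ ∧ (∀ l, C.IsBlockM (K l)) ∧
  (∀ l m, l ≠ m → K l ∩ K m ⊆ ({topC, botC} : Set ((B → L) × (A → L)))) ∧
  (⋃ l, K l) = C.concepts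

/-- The block of concepts `K_λ` determined by a set of attributes `A'`:
the concepts which are the infimum of `M_g^{A'}`, together with the top and the
bottom of `M`. -/
noncomputable def Kblock (A' : Set A) : Set ((B → L) × (A → L)) :=
  {c ∈ C.concepts | c.1 = ⨅ m ∈ C.Mg c.1 A', m.1} ∪
    ({topC, botC} : Set ((B → L) × (A → L)))

/-- The set of attributes `A_μ` associated with a block of concepts `K`. -/
noncomputable def Amu (K : Set ((B → L) × (A → L))) : Set A :=
  {a | ∃ x : L, C.attrConcept a x ∈
    K \ ({topC, botC} : Set ((B → L) × (A → L)))}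

/-- The set of objects `B_μ` associated with a block of concepts `K`. -/
noncomputable def Bmu (K : Set ((B → L) × (A → L))) : Set B :=
  {b | ∃ y : L, C.objConcept b y ∈
    K \ ({topC, botC} : Set ((B → L) × (A → L)))}

end FCAContext

namespace FCAContext

variable {L I A B : Type*} [CompleteLattice L] (C : FCAContext L I A B)

lemma conj_mono_left {i : I} {x x' : L} (y : L) (h : x ≤ x') :
    C.conj i x y ≤ C.conj i x' y :=
  (C.adjoint_left i x y _).1 (le_trans h ((C.adjoint_left i x' y _).2 le_rfl))

lemma conj_mono_right {i : I} (x : L) {y y' : L} (h : y ≤ y') :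
    C.conj i x y ≤ C.conj i x y' :=
  (C.adjoint_right i x y _).2 (le_trans h ((C.adjoint_right i x y' _).1 le_rfl))

lemma conj_bot_left (i : I) (y : L) : C.conj i ⊥ y = ⊥ :=
  le_bot_iff.1 ((C.conj_mono_right ⊥ le_top).trans_eq (C.boundary_right i ⊥))

lemma conj_bot_right (i : I) (x : L) : C.conj i x ⊥ = ⊥ :=
  le_bot_iff.1 ((C.conj_mono_left ⊥ le_top).trans_eq (C.boundary_left i ⊥))

lemma limp_bot_arg (i : I) (z : L) : C.limp i z ⊥ = ⊤ :=
  top_le_iff.1 ((C.adjoint_left i ⊤ ⊥ z).2 (by rw [C.conj_bot_right]; exact bot_le))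

lemma rimp_bot_arg (i : I) (z : L) : C.rimp i z ⊥ = ⊤ :=
  top_le_iff.1 ((C.adjoint_right i ⊥ ⊤ z).1 (by rw [C.conj_bot_left]; exact bot_le))

lemma limp_top_arg (i : I) (z : L) : C.limp i z ⊤ = z := by
  apply le_antisymm
  · have := (C.adjoint_left i (C.limp i z ⊤) ⊤ z).1 le_rfl
    rwa [C.boundary_right] at this
  · exact (C.adjoint_left i z ⊤ z).2 (by rw [C.boundary_right])

lemma rimp_top_arg (i : I) (z : L) : C.rimp i z ⊤ = z := by
  apply le_antisymm
  · have := (C.adjoint_right i ⊤ (C.rimp i z ⊤) z).2 le_rfl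
    rwa [C.boundary_left] at this
  · exact (C.adjoint_right i ⊤ z z).1 (by rw [C.boundary_left])

lemma rimp_anti {i : I} (z : L) {x x' : L} (h : x ≤ x') :
    C.rimp i z x' ≤ C.rimp i z x :=
  (C.adjoint_right i x _ z).1
    ((C.conj_mono_left _ h).trans ((C.adjoint_right i x' _ z).2 le_rfl))

lemma limp_anti {i : I} (z : L) {y y' : L} (h : y ≤ y') :
    C.limp i z y' ≤ C.limp i z y :=
  (C.adjoint_left i _ y z).2
    ((C.conj_mono_right _ h).trans ((C.adjoint_left i _ y' z).1 le_rfl))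

lemma rimp_bot_ne_top {i : I} {x : L} (hx : x ≠ ⊥) : C.rimp i ⊥ x ≠ ⊤ := by
  intro h
  apply hx
  have := (C.adjoint_right i x ⊤ ⊥).2 (h ▸ le_rfl)
  rw [C.boundary_right] at this
  exact le_bot_iff.1 this

lemma limp_bot_ne_top {i : I} {y : L} (hy : y ≠ ⊥) : C.limp i ⊥ y ≠ ⊤ := by
  intro h
  apply hy
  have := (C.adjoint_left i ⊤ y ⊥).1 (h ▸ le_rfl)
  rw [C.boundary_left] at this
  exact le_bot_iff.1 this

lemma galois (f : A → L) (g : B → L) : f ≤ C.up g ↔ g ≤ C.down f := by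
  constructor
  · intro h b
    refine le_iInf fun a => ?_
    exact (C.adjoint_right _ _ _ _).1 ((C.adjoint_left _ _ _ _).1 ((h a).trans (iInf_le _ b)))
  · intro h a
    refine le_iInf fun b => ?_
    exact (C.adjoint_left _ _ _ _).2 ((C.adjoint_right _ _ _ _).2 ((h b).trans (iInf_le _ a)))

lemma up_anti {g g' : B → L} (h : g ≤ g') : C.up g' ≤ C.up g :=
  fun a => iInf_mono fun b => C.limp_anti _ (h b)

lemma down_anti {f f' : A → L} (h : f ≤ f') : C.down f' ≤ C.down f :=
  fun b => iInf_mono fun a => C.rimp_anti _ (h a)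

lemma le_down_up (g : B → L) : g ≤ C.down (C.up g) := (C.galois _ _).1 le_rfl

lemma le_up_down (f : A → L) : f ≤ C.up (C.down f) := (C.galois _ _).2 le_rfl

lemma up_down_up (g : B → L) : C.up (C.down (C.up g)) = C.up g :=
  le_antisymm (C.up_anti (C.le_down_up g)) (C.le_up_down _)

lemma down_up_down (f : A → L) : C.down (C.up (C.down f)) = C.down f :=
  le_antisymm (C.down_anti (C.le_up_down f)) (C.le_down_up _)

lemma attr_mem (a : A) (x : L) : C.attrConcept a x ∈ C.concepts :=
  ⟨rfl, C.down_up_down _⟩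

lemma obj_mem (b : B) (y : L) : C.objConcept b y ∈ C.concepts :=
  ⟨C.up_down_up _, rfl⟩

lemma attr_fst (a : A) (x : L) :
    (C.attrConcept a x).1 = fun b => C.rimp (C.sig a b) (C.R a b) x := by
  funext b
  apply le_antisymm
  · exact iInf_le_of_le a (by simp [phiA])
  · refine le_iInf fun a' => ?_
    by_cases h : a' = a
    · subst h; simp [phiA]
    · simp [phiA, h, C.rimp_bot_arg]

lemma obj_snd (b : B) (y : L) :
    (C.objConcept b y).2 = fun a => C.limp (C.sig a b) (C.R a b) y := by
  funext a
  apply le_antisymm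
  · exact iInf_le_of_le b (by simp [phiB])
  · refine le_iInf fun b' => ?_
    by_cases h : b' = b
    · subst h; simp [phiB]
    · simp [phiB, h, C.limp_bot_arg]

lemma up_const_bot : C.up (fun _ => (⊥ : L)) = fun _ => ⊤ := by
  funext a; simp [up, C.limp_bot_arg]

lemma down_const_bot : C.down (fun _ => (⊥ : L)) = fun _ => ⊤ := by
  funext b; simp [down, C.rimp_bot_arg]

lemma up_const_top (h : ∀ a : A, ∃ b : B, C.R a b = ⊥) :
    C.up (fun _ => (⊤ : L)) = fun _ => ⊥ := by
  funext a
  obtain ⟨b, hb⟩ := h a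
  refine le_bot_iff.1 ((iInf_le _ b).trans ?_)
  rw [C.limp_top_arg, hb]

lemma down_const_top (h : ∀ b : B, ∃ a : A, C.R a b = ⊥) :
    C.down (fun _ => (⊤ : L)) = fun _ => ⊥ := by
  funext b
  obtain ⟨a, ha⟩ := h b
  refine le_bot_iff.1 ((iInf_le _ a).trans ?_)
  rw [C.rimp_top_arg, ha]

lemma eq_topC (hn : ∀ a : A, ∃ b : B, C.R a b = ⊥) {c : (B → L) × (A → L)}
    (hc : c ∈ C.concepts) (h1 : c.1 = fun _ => ⊤) : c = topC := by
  have h2 : c.2 = fun _ => (⊥ : L) := by rw [← hc.1, h1, C.up_const_top hn]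
  exact Prod.ext h1 h2

lemma eq_botC {c : (B → L) × (A → L)} (hc : c ∈ C.concepts)
    (h1 : c.1 = fun _ => ⊥) : c = botC := by
  have h2 : c.2 = fun _ => (⊤ : L) := by rw [← hc.1, h1, C.up_const_bot]
  exact Prod.ext h1 h2

lemma ne_topC_fst {p : (B → L) × (A → L)} {b : B} (h : p.1 b ≠ ⊤) : p ≠ topC :=
  fun he => h (by rw [he]; rfl)

lemma ne_botC_fst {p : (B → L) × (A → L)} {b : B} (h : p.1 b ≠ ⊥) : p ≠ botC :=
  fun he => h (by rw [he]; rfl)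

lemma ne_topC_snd {p : (B → L) × (A → L)} {a : A} (h : p.2 a ≠ ⊥) : p ≠ topC :=
  fun he => h (by rw [he]; rfl)

lemma ne_botC_snd {p : (B → L) × (A → L)} {a : A} (h : p.2 a ≠ ⊤) : p ≠ botC :=
  fun he => h (by rw [he]; rfl)

lemma ne_botC_of_le {c d : (B → L) × (A → L)} (hc : c ∈ C.concepts)
    (h : cle c d) (hcb : c ≠ botC) : d ≠ botC := by
  intro hd
  apply hcb
  refine C.eq_botC hc (funext fun b => le_bot_iff.1 ?_)
  have := h b
  rw [hd] at this
  exact this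

lemma ne_topC_of_ge (hn : ∀ a : A, ∃ b : B, C.R a b = ⊥)
    {c d : (B → L) × (A → L)} (hd : d ∈ C.concepts)
    (h : cle c d) (hdt : d ≠ topC) : c ≠ topC := by
  intro hc
  apply hdt
  refine C.eq_topC hn hd (funext fun b => top_le_iff.1 ?_)
  have := h b
  rw [hc] at this
  exact this

lemma block_closure' {Kb : Set ((B → L) × (A → L))} (hK : C.IsBlockM Kb)
    {k c : (B → L) × (A → L)}
    (hk : k ∈ Kb \ ({topC, botC} : Set ((B → L) × (A → L))))
    (hc : c ∈ C.concepts) (hcmp : cle k c ∨ cle c k)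
    (hct : c ≠ topC) (hcb : c ≠ botC) :
    c ∈ Kb \ ({topC, botC} : Set ((B → L) × (A → L))) :=
  ⟨hK.2.2.2.2 k hk c hc hcmp (by simp [hct, hcb]), by simp [hct, hcb]⟩

lemma attr_fst_apply (a : A) (x : L) (b : B) :
    (C.attrConcept a x).1 b = C.rimp (C.sig a b) (C.R a b) x :=
  congrFun (C.attr_fst a x) b

lemma obj_snd_apply (a : A) (b : B) (y : L) :
    (C.objConcept b y).2 a = C.limp (C.sig a b) (C.R a b) y :=
  congrFun (C.obj_snd b y) a

lemma attr_top_fst (a : A) (b : B) : (C.attrConcept a ⊤).1 b = C.R a b := by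
  rw [C.attr_fst_apply, C.rimp_top_arg]

lemma obj_top_snd (a : A) (b : B) : (C.objConcept b ⊤).2 a = C.R a b := by
  rw [C.obj_snd_apply, C.limp_top_arg]

lemma attr_top_ne_topC (hn : C.Normalized) (a : A) : C.attrConcept a ⊤ ≠ topC := by
  obtain ⟨b2, hb2⟩ := hn.2.1 a
  obtain ⟨b1, hb1⟩ := hn.1 a
  refine ne_topC_fst (b := b2) ?_
  rw [C.attr_top_fst a b2, hb2]
  intro h
  exact hb1 (le_bot_iff.1 (h ▸ le_top))

lemma attr_top_ne_botC (hn : C.Normalized) (a : A) : C.attrConcept a ⊤ ≠ botC := by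
  obtain ⟨b1, hb1⟩ := hn.1 a
  refine ne_botC_fst (b := b1) ?_
  rw [C.attr_top_fst a b1]
  exact hb1

lemma obj_top_ne_topC (hn : C.Normalized) (b : B) : C.objConcept b ⊤ ≠ topC := by
  obtain ⟨a1, ha1⟩ := hn.2.2.1 b
  refine ne_topC_snd (a := a1) ?_
  rw [C.obj_top_snd a1 b]
  exact ha1

lemma obj_top_ne_botC (hn : C.Normalized) (b : B) : C.objConcept b ⊤ ≠ botC := by
  obtain ⟨a1, ha1⟩ := hn.2.2.1 b
  obtain ⟨a2, ha2⟩ := hn.2.2.2 b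
  refine ne_botC_snd (a := a2) ?_
  rw [C.obj_top_snd a2 b, ha2]
  intro h
  exact ha1 (le_bot_iff.1 (h ▸ le_top))

lemma mem_Amu_iff (hn : C.Normalized) {Kb : Set ((B → L) × (A → L))}
    (hK : C.IsBlockM Kb) (a : A) :
    a ∈ C.Amu Kb ↔ C.attrConcept a ⊤ ∈ Kb \ ({topC, botC} : Set ((B → L) × (A → L))) := by
  constructor
  · rintro ⟨x, hx⟩
    refine C.block_closure' hK hx (C.attr_mem a ⊤) (Or.inr ?_)
      (C.attr_top_ne_topC hn a) (C.attr_top_ne_botC hn a)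
    show (C.attrConcept a ⊤).1 ≤ (C.attrConcept a x).1
    rw [C.attr_fst, C.attr_fst]
    exact fun b => C.rimp_anti _ le_top
  · intro h
    exact ⟨⊤, h⟩

lemma mem_Bmu_iff (hn : C.Normalized) {Kb : Set ((B → L) × (A → L))}
    (hK : C.IsBlockM Kb) (b : B) :
    b ∈ C.Bmu Kb ↔ C.objConcept b ⊤ ∈ Kb \ ({topC, botC} : Set ((B → L) × (A → L))) := by
  constructor
  · rintro ⟨y, hy⟩
    refine C.block_closure' hK hy (C.obj_mem b ⊤) (Or.inl ?_)
      (C.obj_top_ne_topC hn b) (C.obj_top_ne_botC hn b)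
    show (C.objConcept b y).1 ≤ (C.objConcept b ⊤).1
    exact C.down_anti (C.up_anti (fun b' => by by_cases h : b' = b <;> simp [phiB, h]))
  · intro h
    exact ⟨⊤, h⟩

lemma obj_top_mem_of_attr (hn : C.Normalized) {Kb : Set ((B → L) × (A → L))}
    (hK : C.IsBlockM Kb) {a : A} {b : B}
    (ha : C.attrConcept a ⊤ ∈ Kb \ ({topC, botC} : Set ((B → L) × (A → L))))
    {x y : L} (hx : x ≠ ⊥) (hy : y ≠ ⊥)
    (hxy : C.conj (C.sig a b) x y ≤ C.R a b) :
    C.objConcept b ⊤ ∈ Kb \ ({topC, botC} : Set ((B → L) × (A → L))) := by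
  obtain ⟨b1, hb1⟩ := hn.1 a
  obtain ⟨b2, hb2⟩ := hn.2.1 a
  obtain ⟨a2, ha2⟩ := hn.2.2.2 b
  have hax_fst_b2 : (C.attrConcept a x).1 b2 ≠ ⊤ := by
    rw [C.attr_fst_apply, hb2]; exact C.rimp_bot_ne_top hx
  have step1 : C.attrConcept a x ∈ Kb \ ({topC, botC} : Set ((B → L) × (A → L))) := by
    refine C.block_closure' hK ha (C.attr_mem a x) (Or.inl ?_)
      (ne_topC_fst hax_fst_b2) ?_
    · show (C.attrConcept a ⊤).1 ≤ (C.attrConcept a x).1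
      rw [C.attr_fst, C.attr_fst]
      exact fun b' => C.rimp_anti _ le_top
    · refine ne_botC_fst (b := b1) ?_
      rw [C.attr_fst_apply]
      intro h
      apply hb1
      have hle : C.R a b1 ≤ C.rimp (C.sig a b1) (C.R a b1) x := by
        conv_lhs => rw [← C.rimp_top_arg (C.sig a b1) (C.R a b1)]
        exact C.rimp_anti _ le_top
      exact le_bot_iff.1 (h ▸ hle)
  have hyr : y ≤ C.rimp (C.sig a b) (C.R a b) x := (C.adjoint_right _ _ _ _).1 hxy
  have hphi : phiB b y ≤ (C.attrConcept a x).1 := by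
    intro b'
    by_cases h : b' = b
    · subst h; rw [C.attr_fst_apply]; simpa [phiB] using hyr
    · simp [phiB, h]
  have step2 : cle (C.objConcept b y) (C.attrConcept a x) := by
    show (C.objConcept b y).1 ≤ (C.attrConcept a x).1
    calc (C.objConcept b y).1 = C.down (C.up (phiB b y)) := rfl
      _ ≤ C.down (C.up ((C.attrConcept a x).1)) := C.down_anti (C.up_anti hphi)
      _ = (C.attrConcept a x).1 := C.down_up_down _
  have step3 : C.objConcept b y ≠ topC := by
    refine ne_topC_fst (b := b2) ?_
    intro h
    exact hax_fst_b2 (top_le_iff.1 (h ▸ step2 b2))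
  have step4 : C.objConcept b y ≠ botC := by
    refine ne_botC_snd (a := a2) ?_
    rw [C.obj_snd_apply, ha2]
    exact C.limp_bot_ne_top hy
  have step5 := C.block_closure' hK step1 (C.obj_mem b y) (Or.inr step2) step3 step4
  refine C.block_closure' hK step5 (C.obj_mem b ⊤) (Or.inl ?_)
    (C.obj_top_ne_topC hn b) (C.obj_top_ne_botC hn b)
  show (C.objConcept b y).1 ≤ (C.objConcept b ⊤).1
  exact C.down_anti (C.up_anti (fun b' => by by_cases h : b' = b <;> simp [phiB, h]))

lemma attr_top_mem_of_obj (hn : C.Normalized) {Kb : Set ((B → L) × (A → L))}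
    (hK : C.IsBlockM Kb) {a : A} {b : B}
    (hb : C.objConcept b ⊤ ∈ Kb \ ({topC, botC} : Set ((B → L) × (A → L))))
    {x y : L} (hx : x ≠ ⊥) (hy : y ≠ ⊥)
    (hxy : C.conj (C.sig a b) x y ≤ C.R a b) :
    C.attrConcept a ⊤ ∈ Kb \ ({topC, botC} : Set ((B → L) × (A → L))) := by
  obtain ⟨a1, ha1⟩ := hn.2.2.1 b
  obtain ⟨a2, ha2⟩ := hn.2.2.2 b
  obtain ⟨b2, hb2⟩ := hn.2.1 a
  have step1 : C.objConcept b y ∈ Kb \ ({topC, botC} : Set ((B → L) × (A → L))) := by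
    refine C.block_closure' hK hb (C.obj_mem b y) (Or.inr ?_) ?_ ?_
    · show (C.objConcept b y).1 ≤ (C.objConcept b ⊤).1
      exact C.down_anti (C.up_anti (fun b' => by by_cases h : b' = b <;> simp [phiB, h]))
    · refine ne_topC_snd (a := a1) ?_
      rw [C.obj_snd_apply]
      intro h
      apply ha1
      have hle : C.R a1 b ≤ C.limp (C.sig a1 b) (C.R a1 b) y := by
        conv_lhs => rw [← C.limp_top_arg (C.sig a1 b) (C.R a1 b)]
        exact C.limp_anti _ le_top
      exact le_bot_iff.1 (h ▸ hle)
    · refine ne_botC_snd (a := a2) ?_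
      rw [C.obj_snd_apply, ha2]
      exact C.limp_bot_ne_top hy
  have hxl : x ≤ C.limp (C.sig a b) (C.R a b) y := (C.adjoint_left _ _ _ _).2 hxy
  have hphi : phiA a x ≤ (C.objConcept b y).2 := by
    intro a'
    by_cases h : a' = a
    · subst h; rw [C.obj_snd_apply]; simpa [phiA] using hxl
    · simp [phiA, h]
  have step2 : cle (C.objConcept b y) (C.attrConcept a x) := by
    show (C.objConcept b y).1 ≤ (C.attrConcept a x).1
    exact C.down_anti hphi
  have step3 : C.attrConcept a x ≠ topC := by
    refine ne_topC_fst (b := b2) ?_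
    rw [C.attr_fst_apply, hb2]
    exact C.rimp_bot_ne_top hx
  have step4 : C.attrConcept a x ≠ botC :=
    C.ne_botC_of_le (C.obj_mem b y) step2 (fun h => step1.2 (by simp [h]))
  have step5 := C.block_closure' hK step1 (C.attr_mem a x) (Or.inl step2) step3 step4
  refine C.block_closure' hK step5 (C.attr_mem a ⊤) (Or.inr ?_)
    (C.attr_top_ne_topC hn a) (C.attr_top_ne_botC hn a)
  show (C.attrConcept a ⊤).1 ≤ (C.attrConcept a x).1
  rw [C.attr_fst, C.attr_fst]
  exact fun b' => C.rimp_anti _ le_top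

lemma exists_attr (hn : C.Normalized) {c : (B → L) × (A → L)}
    (hc : c ∈ C.concepts) (hct : c ≠ topC) :
    ∃ a x, cle c (C.attrConcept a x) ∧ C.attrConcept a x ≠ topC := by
  have hb0 : ∃ b, c.1 b ≠ ⊤ := by
    by_contra h
    push_neg at h
    exact hct (C.eq_topC hn.2.1 hc (funext h))
  obtain ⟨b0, hb0⟩ := hb0
  have ha0 : ∃ a0, C.rimp (C.sig a0 b0) (C.R a0 b0) (c.2 a0) ≠ ⊤ := by
    by_contra h
    push_neg at h
    exact hb0 (by rw [← hc.2]; exact iInf_eq_top.2 h)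
  obtain ⟨a0, ha0⟩ := ha0
  refine ⟨a0, c.2 a0, ?_, ne_topC_fst (b := b0) (by rw [C.attr_fst_apply]; exact ha0)⟩
  show c.1 ≤ (C.attrConcept a0 (c.2 a0)).1
  rw [← hc.2]
  refine C.down_anti ?_
  intro a'
  by_cases h : a' = a0
  · subst h; simp [phiA]
  · simp [phiA, h]

lemma exists_obj (hn : C.Normalized) {c : (B → L) × (A → L)}
    (hc : c ∈ C.concepts) (hcb : c ≠ botC) :
    ∃ b y, cle (C.objConcept b y) c ∧ C.objConcept b y ≠ botC := by
  have ha0 : ∃ a, c.2 a ≠ ⊤ := by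
    by_contra h
    push_neg at h
    apply hcb
    refine C.eq_botC hc ?_
    rw [← hc.2, funext h, C.down_const_top hn.2.2.2]
  obtain ⟨a0, ha0⟩ := ha0
  have hb0 : ∃ b0, C.limp (C.sig a0 b0) (C.R a0 b0) (c.1 b0) ≠ ⊤ := by
    by_contra h
    push_neg at h
    exact ha0 (by rw [← hc.1]; exact iInf_eq_top.2 h)
  obtain ⟨b0, hb0⟩ := hb0
  refine ⟨b0, c.1 b0, ?_, ne_botC_snd (a := a0) (by rw [C.obj_snd_apply]; exact hb0)⟩
  show (C.objConcept b0 (c.1 b0)).1 ≤ c.1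
  have hphi : phiB b0 (c.1 b0) ≤ c.1 := by
    intro b'
    by_cases h : b' = b0
    · subst h; simp [phiB]
    · simp [phiB, h]
  calc (C.objConcept b0 (c.1 b0)).1 = C.down (C.up (phiB b0 (c.1 b0))) := rfl
    _ ≤ C.down (C.up c.1) := C.down_anti (C.up_anti hphi)
    _ = C.down c.2 := by rw [hc.1]
    _ = c.1 := hc.2

end FCAContext

/-- Let `(A,B,R,σ)` be a normalized context. If the concept lattice
has a decomposition into independent blocks `{K μ}`, then the family `{(A_μ, B_μ)}` of
associated attribute and object sets is a decomposition of `(A,B,R,σ)` into independent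
subcontexts. -/
theorem FCAContext.block_decomposition_gives_subcontext_decomposition
    {L I A B : Type*} [CompleteLattice L] [Finite I] [Nonempty I]
    [Nonempty A] [Nonempty B] (C : FCAContext L I A B)
    (hn : C.Normalized)
    {Λ : Type*} (K : Λ → Set ((B → L) × (A → L)))
    (hdec : C.BlockDecomposition K) :
    C.SubcontextDecomposition (fun μ => C.Amu (K μ)) (fun μ => C.Bmu (K μ)) := by
  classical
  obtain ⟨hΛ, hblocks, hKdisj, hunion⟩ := hdec
  have hbt : (⊥ : L) ≠ ⊤ := by
    obtain ⟨b1, hb1⟩ := hn.1 (Classical.arbitrary A)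
    intro h
    exact hb1 (le_bot_iff.1 (h ▸ le_top))
  have htb : (⊤ : L) ≠ ⊥ := fun h => hbt h.symm
  have hA_iff := fun μ => C.mem_Amu_iff hn (hblocks μ)
  have hB_iff := fun μ => C.mem_Bmu_iff hn (hblocks μ)
  have hlink1 : ∀ μ (a : A) (b : B), a ∈ C.Amu (K μ) → C.R a b ≠ ⊥ → b ∈ C.Bmu (K μ) := by
    intro μ a b ha hR
    exact (hB_iff μ b).2 (C.obj_top_mem_of_attr hn (hblocks μ) ((hA_iff μ a).1 ha)
      htb hR (le_of_eq (C.boundary_left _ _)))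
  have hlink2 : ∀ μ (a : A) (b : B), b ∈ C.Bmu (K μ) → C.R a b ≠ ⊥ → a ∈ C.Amu (K μ) := by
    intro μ a b hb hR
    exact (hA_iff μ a).2 (C.attr_top_mem_of_obj hn (hblocks μ) ((hB_iff μ b).1 hb)
      hR htb (le_of_eq (C.boundary_right _ _)))
  have hAdisj : ∀ l m, l ≠ m → Disjoint (C.Amu (K l)) (C.Amu (K m)) := by
    intro l m hlm
    rw [Set.disjoint_left]
    intro a hal ham
    have h1 := (hA_iff l a).1 hal
    have h2 := (hA_iff m a).1 ham
    exact h1.2 (hKdisj l m hlm ⟨h1.1, h2.1⟩)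
  have hBdisj : ∀ l m, l ≠ m → Disjoint (C.Bmu (K l)) (C.Bmu (K m)) := by
    intro l m hlm
    rw [Set.disjoint_left]
    intro b hbl hbm
    have h1 := (hB_iff l b).1 hbl
    have h2 := (hB_iff m b).1 hbm
    exact h1.2 (hKdisj l m hlm ⟨h1.1, h2.1⟩)
  have hAne : ∀ μ, (C.Amu (K μ)).Nonempty := by
    intro μ
    obtain ⟨c, hcK, hcTB⟩ := (hblocks μ).2.2.1
    have hcC : c ∈ C.concepts := (hblocks μ).1 hcK
    have hct : c ≠ topC := fun h => hcTB (by simp [h])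
    have hcb : c ≠ botC := fun h => hcTB (by simp [h])
    obtain ⟨a, x, hle, hat⟩ := C.exists_attr hn hcC hct
    have hab : C.attrConcept a x ≠ botC := C.ne_botC_of_le hcC hle hcb
    exact ⟨a, x, C.block_closure' (hblocks μ) ⟨hcK, hcTB⟩ (C.attr_mem a x)
      (Or.inl hle) hat hab⟩
  have hBne : ∀ μ, (C.Bmu (K μ)).Nonempty := by
    intro μ
    obtain ⟨c, hcK, hcTB⟩ := (hblocks μ).2.2.1
    have hcC : c ∈ C.concepts := (hblocks μ).1 hcK
    have hct : c ≠ topC := fun h => hcTB (by simp [h])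
    have hcb : c ≠ botC := fun h => hcTB (by simp [h])
    obtain ⟨b, y, hle, hbb⟩ := C.exists_obj hn hcC hcb
    have hbt' : C.objConcept b y ≠ topC := C.ne_topC_of_ge hn.2.1 hcC hle hct
    exact ⟨b, y, C.block_closure' (hblocks μ) ⟨hcK, hcTB⟩ (C.obj_mem b y)
      (Or.inr hle) hbt' hbb⟩
  have hν : ∀ μ : Λ, ∃ ν, ν ≠ μ := by
    intro μ
    by_contra h
    push_neg at h
    apply (hblocks μ).2.1
    apply Set.Subset.antisymm (hblocks μ).1
    intro c hc
    rw [← hunion, Set.mem_iUnion] at hc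
    obtain ⟨ν, hcs⟩ := hc
    rw [h ν] at hcs
    exact hcs
  refine ⟨hΛ, ?_, hAdisj, hBdisj, ?_, ?_, ?_, ?_⟩
  · intro μ
    refine ⟨hAne μ, hBne μ, ?_, ?_, ?_, ?_, ?_⟩
    · obtain ⟨ν, hνμ⟩ := hν μ
      obtain ⟨a', ha'⟩ := hAne ν
      intro h
      exact Set.disjoint_left.1 (hAdisj ν μ hνμ) ha' (by rw [show C.Amu (K μ) = Set.univ from h]; trivial)
    · obtain ⟨ν, hνμ⟩ := hν μ
      obtain ⟨b', hb'⟩ := hBne ν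
      intro h
      exact Set.disjoint_left.1 (hBdisj ν μ hνμ) hb' (by rw [show C.Bmu (K μ) = Set.univ from h]; trivial)
    · obtain ⟨a, ha⟩ := hAne μ
      obtain ⟨b1, hb1⟩ := hn.1 a
      exact ⟨a, ha, b1, hlink1 μ a b1 ha hb1, hb1⟩
    · intro a ha b hb
      by_contra hR
      exact hb (hlink1 μ a b ha hR)
    · intro a ha b hb
      by_contra hR
      exact ha (hlink2 μ a b hb hR)
  · apply Set.eq_univ_iff_forall.2
    intro a
    have hm := C.attr_mem a (⊤ : L)
    rw [← hunion, Set.mem_iUnion] at hm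
    obtain ⟨μ, hμ⟩ := hm
    rw [Set.mem_iUnion]
    exact ⟨μ, (hA_iff μ a).2 ⟨hμ,
      by simp [C.attr_top_ne_topC hn a, C.attr_top_ne_botC hn a]⟩⟩
  · apply Set.eq_univ_iff_forall.2
    intro b
    have hm := C.obj_mem b (⊤ : L)
    rw [← hunion, Set.mem_iUnion] at hm
    obtain ⟨μ, hμ⟩ := hm
    rw [Set.mem_iUnion]
    exact ⟨μ, (hB_iff μ b).2 ⟨hμ,
      by simp [C.obj_top_ne_topC hn b, C.obj_top_ne_botC hn b]⟩⟩
  · intro μ a ha b hb x y hx hy heq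
    exact ha ((hA_iff μ a).2 (C.attr_top_mem_of_obj hn (hblocks μ)
      ((hB_iff μ b).1 hb) hx hy (heq.le.trans bot_le)))
  · intro μ a ha b hb x y hx hy heq
    exact hb ((hB_iff μ b).2 (C.obj_top_mem_of_attr hn (hblocks μ)
      ((hA_iff μ a).1 ha) hx hy (heq.le.trans bot_le)))
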